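/- arXiv:2201.09028 — 2 statements merged into one kernel-verified Lean document; each statement's English description precedes it below -/
import Mathlib

section
/- Let P ∈ GL_d(ℝ) have d simple eigenvalues of pairwise distinct absolute values, with corresponding (unit) eigenvectors v_1, …, v_d ordered so that the moduli of the eigenvalues are strictly decreasing. Then for every ε > 0 there exists N ∈ ℕ such that for every direction 𝗏 ∈ ℙ^{d-1} there exists an integer a ∈ [0, N] with ρ(𝖯^a 𝗏, 𝗏_i) ≤ ε for some i ∈ {1,…,d}. -/
open Matrix

noncomputable def rho {d : ℕ} (u v : EuclideanSpace ℝ (Fin d)) : ℝ :=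
  min (InnerProductGeometry.angle u v) (InnerProductGeometry.angle u (-v))

noncomputable def mApply {d : ℕ} (g : Matrix (Fin d) (Fin d) ℝ)
    (u : EuclideanSpace ℝ (Fin d)) : EuclideanSpace ℝ (Fin d) :=
  Matrix.toEuclideanLin g u

noncomputable def rhoNorm {d : ℕ} (g : Matrix (Fin d) (Fin d) ℝ) : ℝ :=
  sSup {r : ℝ | ∃ u v : EuclideanSpace ℝ (Fin d), u ≠ 0 ∧ v ≠ 0 ∧ rho u v ≠ 0 ∧
    r = rho (mApply g u) (mApply g v) / rho u v}

section aux

open InnerProductGeometry Filter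

variable {d : ℕ}

lemma rho_smul_left {c : ℝ} (hc : c ≠ 0) (u y : EuclideanSpace ℝ (Fin d)) :
    rho (c • u) y = rho u y := by
  rcases hc.lt_or_gt with h | h
  · unfold rho
    rw [angle_smul_left_of_neg _ _ h, angle_smul_left_of_neg _ _ h,
      angle_neg_left, angle_neg_left, angle_neg_right, sub_sub_cancel, min_comm]
  · unfold rho
    rw [angle_smul_left_of_pos _ _ h, angle_smul_left_of_pos _ _ h]

lemma rho_smul_self {c : ℝ} (hc : c ≠ 0) {y : EuclideanSpace ℝ (Fin d)} (hy : y ≠ 0) :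
    rho (c • y) y = 0 := by
  rw [rho_smul_left hc]
  unfold rho
  rw [angle_self hy, angle_self_neg_of_nonzero hy]
  exact min_eq_left Real.pi_pos.le

lemma continuousAt_rho {u y : EuclideanSpace ℝ (Fin d)} (hu : u ≠ 0) (hy : y ≠ 0) :
    ContinuousAt (fun x => rho x y) u := by
  have h1 : ContinuousAt (fun x : EuclideanSpace ℝ (Fin d) => angle x y) u := by
    have h := (InnerProductGeometry.continuousAt_angle (x := (u, y)) hu hy)
    exact ContinuousAt.comp (f := fun x : EuclideanSpace ℝ (Fin d) => (x, y)) h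
      ((continuous_id.prodMk continuous_const).continuousAt)
  have h2 : ContinuousAt (fun x : EuclideanSpace ℝ (Fin d) => angle x (-y)) u := by
    have h := (InnerProductGeometry.continuousAt_angle (x := (u, -y)) hu (neg_ne_zero.2 hy))
    exact ContinuousAt.comp (f := fun x : EuclideanSpace ℝ (Fin d) => (x, -y)) h
      ((continuous_id.prodMk continuous_const).continuousAt)
  exact h1.min h2

lemma mApply_mul (A B : Matrix (Fin d) (Fin d) ℝ) (u : EuclideanSpace ℝ (Fin d)) :
    mApply (A * B) u = mApply A (mApply B u) := by
  simp [mApply, Matrix.toEuclideanLin_apply, Matrix.mulVec_mulVec]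

lemma mApply_one (u : EuclideanSpace ℝ (Fin d)) : mApply 1 u = u := by
  simp [mApply, Matrix.toEuclideanLin_apply]

lemma mApply_smul (A : Matrix (Fin d) (Fin d) ℝ) (c : ℝ) (u : EuclideanSpace ℝ (Fin d)) :
    mApply A (c • u) = c • mApply A u :=
  map_smul (Matrix.toEuclideanLin A) c u

lemma mApply_unit_ne_zero (Q : GL (Fin d) ℝ) {w : EuclideanSpace ℝ (Fin d)} (hw : w ≠ 0) :
    mApply (↑Q : Matrix (Fin d) (Fin d) ℝ) w ≠ 0 := by
  intro h
  apply hw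
  have h1 : mApply (↑(Q⁻¹ * Q) : Matrix (Fin d) (Fin d) ℝ) w
      = mApply ↑Q⁻¹ (mApply (↑Q : Matrix (Fin d) (Fin d) ℝ) w) := by
    rw [Units.val_mul, mApply_mul]
  rw [inv_mul_cancel, h] at h1
  have h2 : mApply (↑(1 : GL (Fin d) ℝ) : Matrix (Fin d) (Fin d) ℝ) w = w := by
    rw [Units.val_one, mApply_one]
  rw [h2] at h1
  rw [h1]
  exact map_zero (Matrix.toEuclideanLin _)

open Filter in
lemma tendsto_rho_eigen (P : GL (Fin d) ℝ) (lam : Fin d → ℝ)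
    (v : Fin d → EuclideanSpace ℝ (Fin d))
    (hbasis : LinearIndependent ℝ v)
    (heig : ∀ i, mApply (↑P : Matrix (Fin d) (Fin d) ℝ) (v i) = lam i • v i)
    (hdistinct : ∀ i j : Fin d, i < j → |lam j| < |lam i|)
    (hne : ∀ i, lam i ≠ 0) (hd : 0 < d) {w : EuclideanSpace ℝ (Fin d)} (hw : w ≠ 0) :
    ∃ i : Fin d, Tendsto
      (fun a : ℕ => rho (mApply (↑(P ^ a) : Matrix (Fin d) (Fin d) ℝ) w) (v i))
      atTop (nhds 0) := by
  have heigpow : ∀ (j : Fin d) (a : ℕ),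
      mApply (↑(P ^ a) : Matrix (Fin d) (Fin d) ℝ) (v j) = lam j ^ a • v j := by
    intro j a
    induction a with
    | zero => rw [pow_zero, Units.val_one, mApply_one, pow_zero, one_smul]
    | succ a ih =>
        rw [pow_succ', Units.val_mul, mApply_mul, ih, mApply_smul, heig, smul_smul,
          pow_succ', mul_comm]
  haveI : Nonempty (Fin d) := ⟨⟨0, hd⟩⟩
  have hcard : Fintype.card (Fin d) = Module.finrank ℝ (EuclideanSpace ℝ (Fin d)) := by
    simp
  let B := basisOfLinearIndependentOfCardEqFinrank hbasis hcard
  have hB : ∀ j, B j = v j := fun j => by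
    simp [B, coe_basisOfLinearIndependentOfCardEqFinrank]
  set c : Fin d → ℝ := fun j => B.repr w j with hc
  have hsupp : ((B.repr w).support).Nonempty := by
    rw [Finsupp.support_nonempty_iff]
    intro h
    exact hw (by simpa using (LinearEquiv.map_eq_zero_iff B.repr).mp h)
  set i := (B.repr w).support.min' hsupp with hi
  have hci : c i ≠ 0 := Finsupp.mem_support_iff.mp ((B.repr w).support.min'_mem hsupp)
  have hlt : ∀ j, j < i → c j = 0 := by
    intro j hj
    by_contra h
    exact absurd (Finset.min'_le _ _ (Finsupp.mem_support_iff.mpr h)) (not_le.mpr hj)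
  have key : ∀ a : ℕ, mApply (↑(P ^ a) : Matrix (Fin d) (Fin d) ℝ) w
      = ∑ j, (c j * lam j ^ a) • v j := by
    intro a
    have hw' : w = ∑ j, c j • v j := by
      conv_lhs => rw [← B.sum_repr w]
      exact Finset.sum_congr rfl fun j _ => by rw [hB]
    rw [hw']
    show Matrix.toEuclideanLin _ _ = _
    rw [map_sum]
    refine Finset.sum_congr rfl fun j _ => ?_
    rw [_root_.map_smul]
    show c j • mApply (↑(P ^ a) : Matrix (Fin d) (Fin d) ℝ) (v j) = _
    rw [heigpow j a, smul_smul]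
  have hform : ∀ a : ℕ, (lam i ^ a)⁻¹ • mApply (↑(P ^ a) : Matrix (Fin d) (Fin d) ℝ) w
      = ∑ j, ((lam i ^ a)⁻¹ * (c j * lam j ^ a)) • v j := by
    intro a
    rw [key a, Finset.smul_sum]
    exact Finset.sum_congr rfl fun j _ => smul_smul _ _ _
  have hT : Tendsto (fun a : ℕ => ∑ j, ((lam i ^ a)⁻¹ * (c j * lam j ^ a)) • v j)
      atTop (nhds (c i • v i)) := by
    have hsum : (∑ j : Fin d, if j = i then c i • v i else (0 : EuclideanSpace ℝ (Fin d)))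
        = c i • v i := by simp
    rw [← hsum]
    refine tendsto_finset_sum _ fun j _ => ?_
    rcases lt_trichotomy j i with hj | rfl | hj
    · have h0 : c j = 0 := hlt j hj
      simpa [h0, hj.ne] using (tendsto_const_nhds :
        Tendsto (fun _ : ℕ => (0 : EuclideanSpace ℝ (Fin d))) atTop _)
    · have heq : (fun a : ℕ => ((lam i ^ a)⁻¹ * (c i * lam i ^ a)) • v i)
          = fun _ : ℕ => c i • v i := by
        funext a
        congr 1
        rw [mul_comm (c i), ← mul_assoc, inv_mul_cancel₀ (pow_ne_zero a (hne i)), one_mul]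
      rw [if_pos rfl, heq]
      exact tendsto_const_nhds
    · have habs : |lam j / lam i| < 1 := by
        rw [abs_div, div_lt_one (abs_pos.2 (hne i))]
        exact hdistinct i j hj
      have h0 : Tendsto (fun a : ℕ => (lam j / lam i) ^ a) atTop (nhds 0) :=
        tendsto_pow_atTop_nhds_zero_of_abs_lt_one habs
      have h1 : Tendsto (fun a : ℕ => (c j * (lam j / lam i) ^ a) • v j) atTop
          (nhds ((c j * 0) • v j)) := (h0.const_mul (c j)).smul_const (v j)
      have heq : (fun a : ℕ => ((lam i ^ a)⁻¹ * (c j * lam j ^ a)) • v j)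
          = fun a : ℕ => (c j * (lam j / lam i) ^ a) • v j := by
        funext a
        congr 1
        rw [div_pow, div_eq_mul_inv]
        ring
      rw [heq, if_neg hj.ne']
      simpa using h1
  have hT2 : Tendsto (fun a : ℕ => (lam i ^ a)⁻¹ •
      mApply (↑(P ^ a) : Matrix (Fin d) (Fin d) ℝ) w) atTop (nhds (c i • v i)) := by
    simpa only [hform] using hT
  have hvi : v i ≠ 0 := hbasis.ne_zero i
  have hlim : Tendsto (fun a : ℕ => rho ((lam i ^ a)⁻¹ •
      mApply (↑(P ^ a) : Matrix (Fin d) (Fin d) ℝ) w) (v i)) atTop (nhds 0) := by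
    have hcont := continuousAt_rho (smul_ne_zero hci hvi) hvi
    have := hcont.tendsto.comp hT2
    rwa [rho_smul_self hci hvi] at this
  refine ⟨i, ?_⟩
  have heq2 : ∀ a : ℕ, rho ((lam i ^ a)⁻¹ •
      mApply (↑(P ^ a) : Matrix (Fin d) (Fin d) ℝ) w) (v i)
      = rho (mApply (↑(P ^ a) : Matrix (Fin d) (Fin d) ℝ) w) (v i) := fun a =>
    rho_smul_left (inv_ne_zero (pow_ne_zero a (hne i))) _ _
  simpa only [heq2] using hlim
end aux

/-- For P with simple eigenvalues of distinct moduli, powers of the projective action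
bring any direction ε-close to one of the eigendirections, in uniformly bounded time. -/
theorem powers_bring_close_to_eigendirection {d : ℕ} (P : GL (Fin d) ℝ)
    (lam : Fin d → ℝ) (v : Fin d → EuclideanSpace ℝ (Fin d))
    (hbasis : LinearIndependent ℝ v)
    (heig : ∀ i, mApply (↑P : Matrix (Fin d) (Fin d) ℝ) (v i) = lam i • v i)
    (hdistinct : ∀ i j : Fin d, i < j → |lam j| < |lam i|)
    (hne : ∀ i, lam i ≠ 0) :
    ∀ ε > 0, ∃ N : ℕ, ∀ w : EuclideanSpace ℝ (Fin d), w ≠ 0 →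
      ∃ a ≤ N, ∃ i : Fin d,
        rho (mApply (↑(P ^ a) : Matrix (Fin d) (Fin d) ℝ) w) (v i) ≤ ε := by
  intro ε hε
  rcases Nat.eq_zero_or_pos d with hd | hd
  · subst hd
    refine ⟨0, fun w hw => absurd ?_ hw⟩
    ext j
    exact Fin.elim0 j
  · have hS : IsCompact (Metric.sphere (0 : EuclideanSpace ℝ (Fin d)) 1) := isCompact_sphere 0 1
    have hsx : ∀ x ∈ Metric.sphere (0 : EuclideanSpace ℝ (Fin d)) 1, x ≠ 0 := by
      intro x hx h
      rw [Metric.mem_sphere, h] at hx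
      simp at hx
    have hpt : ∀ x ∈ Metric.sphere (0 : EuclideanSpace ℝ (Fin d)) 1, ∃ p : ℕ × Fin d,
        rho (mApply (↑(P ^ p.1) : Matrix (Fin d) (Fin d) ℝ) x) (v p.2) < ε := by
      intro x hx
      obtain ⟨i, hi⟩ := tendsto_rho_eigen P lam v hbasis heig hdistinct hne hd (hsx x hx)
      obtain ⟨a, ha⟩ := (hi.eventually (eventually_lt_nhds hε)).exists
      exact ⟨(a, i), ha⟩
    choose F hF using hpt
    have hU : ∀ (x : EuclideanSpace ℝ (Fin d)) (hx : x ∈ Metric.sphere (0 : EuclideanSpace ℝ (Fin d)) 1),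
        {w : EuclideanSpace ℝ (Fin d) |
          rho (mApply (↑(P ^ (F x hx).1) : Matrix (Fin d) (Fin d) ℝ) w) (v (F x hx).2) < ε} ∈ nhds x := by
      intro x hx
      have hMx : mApply (↑(P ^ (F x hx).1) : Matrix (Fin d) (Fin d) ℝ) x ≠ 0 :=
        mApply_unit_ne_zero (P ^ (F x hx).1) (hsx x hx)
      have hlin : Continuous (fun w : EuclideanSpace ℝ (Fin d) =>
          mApply (↑(P ^ (F x hx).1) : Matrix (Fin d) (Fin d) ℝ) w) :=
        (Matrix.toEuclideanLin (↑(P ^ (F x hx).1) : Matrix (Fin d) (Fin d) ℝ)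
          : EuclideanSpace ℝ (Fin d) →ₗ[ℝ] EuclideanSpace ℝ (Fin d)).continuous_of_finiteDimensional
      have hcont : ContinuousAt (fun w : EuclideanSpace ℝ (Fin d) =>
          rho (mApply (↑(P ^ (F x hx).1) : Matrix (Fin d) (Fin d) ℝ) w) (v (F x hx).2)) x :=
        ContinuousAt.comp (f := fun w : EuclideanSpace ℝ (Fin d) =>
            mApply (↑(P ^ (F x hx).1) : Matrix (Fin d) (Fin d) ℝ) w)
          (continuousAt_rho hMx (hbasis.ne_zero _)) hlin.continuousAt
      exact hcont.preimage_mem_nhds (Iio_mem_nhds (hF x hx))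
    obtain ⟨t, ht⟩ := hS.elim_nhds_subcover' _ hU
    refine ⟨t.sup (fun x => (F x.1 x.2).1), ?_⟩
    intro w hw
    have hnw : ‖w‖ ≠ 0 := norm_ne_zero_iff.2 hw
    have hxS : ‖w‖⁻¹ • w ∈ Metric.sphere (0 : EuclideanSpace ℝ (Fin d)) 1 := by
      rw [Metric.mem_sphere, dist_zero_right, norm_smul, norm_inv, norm_norm,
        inv_mul_cancel₀ hnw]
    have hmem := ht hxS
    simp only [Set.mem_iUnion] at hmem
    obtain ⟨x₀, hx₀t, hx₀⟩ := hmem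
    refine ⟨(F x₀.1 x₀.2).1,
      Finset.le_sup (f := fun x : (Metric.sphere (0 : EuclideanSpace ℝ (Fin d)) 1 : Set _)
        => (F x.1 x.2).1) hx₀t, (F x₀.1 x₀.2).2, ?_⟩
    have h1 : rho (mApply (↑(P ^ (F x₀.1 x₀.2).1) : Matrix (Fin d) (Fin d) ℝ) (‖w‖⁻¹ • w))
        (v (F x₀.1 x₀.2).2) < ε := hx₀
    rw [mApply_smul, rho_smul_left (inv_ne_zero hnw)] at h1
    exact h1.le
end

section
/- For every ε > 0 there exists a constant C = C(ε) > 0 such that for every ε-proximal matrix g ∈ GL_d(ℝ), the logarithm of the spectral radius χ_1(g) = log|eig_1(g)| satisfies log‖g‖ − C ≤ χ_1(g) ≤ log‖g‖, where ‖g‖ is the operator norm. -/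
open Matrix

/-- The ρ-Lipschitz seminorm of the projective action of g, restricted to a set of
directions (given as a set of nonzero representative vectors). -/
noncomputable def rhoNormOn {d : ℕ} (g : Matrix (Fin d) (Fin d) ℝ)
    (S : Set (EuclideanSpace ℝ (Fin d))) : ℝ :=
  sSup {r : ℝ | ∃ u ∈ S, ∃ v ∈ S, u ≠ 0 ∧ v ≠ 0 ∧ rho u v ≠ 0 ∧
    r = rho (mApply g u) (mApply g v) / rho u v}

/-- Characteristic polynomial of the complexification of a real matrix. -/
noncomputable def charpolyC {d : ℕ} (g : Matrix (Fin d) (Fin d) ℝ) : Polynomial ℂ :=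
  Matrix.charpoly (g.map (algebraMap ℝ ℂ))

/-- g is proximal: it has a unique eigenvalue of maximal modulus,
of algebraic multiplicity one. -/
def IsProximal {d : ℕ} (g : Matrix (Fin d) (Fin d) ℝ) : Prop :=
  ∃ lam : ℂ, (charpolyC g).IsRoot lam ∧ Polynomial.rootMultiplicity lam (charpolyC g) = 1 ∧
    ∀ μ : ℂ, (charpolyC g).IsRoot μ → μ ≠ lam → ‖μ‖ < ‖lam‖

/-- The maximal modulus of a (complex) eigenvalue of g. -/
noncomputable def eigMax {d : ℕ} (g : Matrix (Fin d) (Fin d) ℝ) : ℝ :=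
  sSup {r : ℝ | ∃ μ : ℂ, (charpolyC g).IsRoot μ ∧ r = ‖μ‖}

/-- Operator norm of a matrix acting on Euclidean space. -/
noncomputable def opN {d : ℕ} (g : Matrix (Fin d) (Fin d) ℝ) : ℝ :=
  ‖Matrix.toEuclideanCLM (𝕜 := ℝ) g‖

/-- g is ε-proximal: it is proximal, the dominant eigendirection v_g makes angle ≥ 2ε with the
invariant complementary hyperplane V_g^<, g maps the complement of the ε-cone around V_g^<
into the ε-cone around v_g, and is ε-Lipschitz (for ρ) there. -/
def IsEpsProximal {d : ℕ} (ε : ℝ) (g : Matrix (Fin d) (Fin d) ℝ) : Prop :=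
  IsProximal g ∧
  ∃ (v : EuclideanSpace ℝ (Fin d)) (c : ℝ) (W : Submodule ℝ (EuclideanSpace ℝ (Fin d))),
    ‖v‖ = 1 ∧ mApply g v = c • v ∧ |c| = eigMax g ∧
    Module.finrank ℝ W = d - 1 ∧ (∀ w ∈ W, mApply g w ∈ W) ∧ v ∉ W ∧
    (∀ w ∈ W, w ≠ 0 → 2 * ε ≤ rho v w) ∧
    (∀ u : EuclideanSpace ℝ (Fin d), u ≠ 0 → (∀ w ∈ W, w ≠ 0 → ε < rho u w) →
      rho (mApply g u) v ≤ ε) ∧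
    rhoNormOn g {u | u ≠ 0 ∧ ∀ w ∈ W, w ≠ 0 → ε < rho u w} ≤ ε

/-!
Write `g v = c v` with `|c| = eig₁(g)` and `ℝ^d = ℝ v ⊕ V_g^<`; the bound `|c| ≤ ‖g‖` is immediate.
Conversely, for a unit `w ∈ V_g^<` and a small `s` depending only on `ε`, the vector `v + s w`
lies outside the `ε`-cone around `V_g^<`, so `g (v + s w) = c v + s g w` lies in the `ε`-cone
around `v`. Since `g w ∈ V_g^<` makes angle at least `2ε` with `v`, this forces
`‖g w‖ ≤ C(ε) |c|`. Finally `v` is uniformly transverse to `V_g^<`, so `x = a v + w` has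
`|a| + ‖w‖ ≤ C(ε) ‖x‖`, whence `‖g‖ ≤ C(ε) |c|`.
-/

open InnerProductGeometry RealInnerProductSpace Real

section Rho

variable {d : ℕ}

lemma rho_le_pi_div_two (u v : EuclideanSpace ℝ (Fin d)) : rho u v ≤ π / 2 := by
  rw [rho, angle_neg_right]
  rcases le_total (angle u v) (π / 2) with h | h
  · exact (min_le_left _ _).trans h
  · exact (min_le_right _ _).trans (by linarith)

lemma rho_nonneg (u v : EuclideanSpace ℝ (Fin d)) : 0 ≤ rho u v :=
  le_min (angle_nonneg u v) (angle_nonneg u (-v))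

lemma abs_inner_eq_cos_rho_mul (u v : EuclideanSpace ℝ (Fin d)) :
    |⟪u, v⟫| = cos (rho u v) * (‖u‖ * ‖v‖) := by
  have hcos : |cos (angle u v)| = cos (rho u v) := by
    rw [rho, angle_neg_right]
    have h0 := angle_nonneg u v
    have hπ := angle_le_pi u v
    rcases le_total (angle u v) (π / 2) with h | h
    · rw [min_eq_left (by linarith), abs_of_nonneg (cos_nonneg_of_mem_Icc ⟨by linarith, h⟩)]
    · rw [min_eq_right (by linarith), cos_pi_sub,
        abs_of_nonpos (cos_nonpos_of_pi_div_two_le_of_le h (by linarith))]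
  rw [← cos_angle_mul_norm_mul_norm, abs_mul,
    abs_of_nonneg (mul_nonneg (norm_nonneg u) (norm_nonneg v)), hcos]

lemma abs_inner_le_of_le_rho {u v : EuclideanSpace ℝ (Fin d)} {θ : ℝ} (hθ : 0 ≤ θ)
    (h : θ ≤ rho u v) : |⟪u, v⟫| ≤ cos θ * (‖u‖ * ‖v‖) := by
  rw [abs_inner_eq_cos_rho_mul]
  gcongr
  exact cos_le_cos_of_nonneg_of_le_pi hθ (by linarith [rho_le_pi_div_two u v, pi_pos]) h

lemma lt_rho_of_abs_inner_lt {u v : EuclideanSpace ℝ (Fin d)} {θ : ℝ} (hθ : θ ≤ π)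
    (h : |⟪u, v⟫| < cos θ * (‖u‖ * ‖v‖)) : θ < rho u v := by
  by_contra! hle
  rw [abs_inner_eq_cos_rho_mul] at h
  have := cos_le_cos_of_nonneg_of_le_pi (rho_nonneg u v) hθ hle
  exact h.not_ge (by gcongr)

lemma cos_mul_le_abs_inner_of_rho_le {u v : EuclideanSpace ℝ (Fin d)} {θ : ℝ} (hθ : θ ≤ π)
    (h : rho u v ≤ θ) : cos θ * (‖u‖ * ‖v‖) ≤ |⟪u, v⟫| :=
  not_lt.mp fun hlt => (lt_rho_of_abs_inner_lt hθ hlt).not_ge h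

end Rho

lemma Submodule.sup_span_singleton_eq_top {K V : Type*} [DivisionRing K] [AddCommGroup V]
    [Module K V] [FiniteDimensional K V] {W : Submodule K V} {v : V}
    (hW : Module.finrank K W = Module.finrank K V - 1) (hv : v ∉ W) :
    W ⊔ Submodule.span K {v} = ⊤ := by
  have hlt : W < W ⊔ Submodule.span K {v} :=
    left_lt_sup.mpr fun h => hv (h (Submodule.mem_span_singleton_self v))
  have h₁ := Submodule.finrank_lt_finrank_of_lt hlt
  have h₂ := Submodule.finrank_le (W ⊔ Submodule.span K {v})
  exact Submodule.eq_top_of_finrank_eq (by omega)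

section Transversal

variable {E : Type*} [NormedAddCommGroup E] [InnerProductSpace ℝ E]

lemma one_sub_mul_abs_add_norm_le {v w : E} {a τ : ℝ} (hv : ‖v‖ = 1) (hτ : 0 ≤ τ)
    (hvw : |⟪v, w⟫| ≤ τ * ‖w‖) : (1 - τ) * (|a| + ‖w‖) ≤ 2 * ‖a • v + w‖ := by
  have hcross : |a * ⟪v, w⟫| ≤ τ * (|a| * ‖w‖) := by
    rw [abs_mul, mul_left_comm]
    exact mul_le_mul_of_nonneg_left hvw (abs_nonneg a)
  have hexpand : ‖a • v + w‖ ^ 2 = a ^ 2 + 2 * (a * ⟪v, w⟫) + ‖w‖ ^ 2 := by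
    rw [norm_add_sq_real, norm_smul, hv, real_inner_smul_left, Real.norm_eq_abs, mul_one, sq_abs]
  have hquad : (1 - τ) * (a ^ 2 + ‖w‖ ^ 2) ≤ ‖a • v + w‖ ^ 2 := by
    nlinarith [neg_abs_le (a * ⟪v, w⟫), sq_nonneg (|a| - ‖w‖), sq_abs a]
  rcases le_or_gt 1 τ with hτ1 | hτ1
  · nlinarith [abs_nonneg a, norm_nonneg w, norm_nonneg (a • v + w)]
  refine le_of_sq_le_sq ?_ (by positivity)
  calc ((1 - τ) * (|a| + ‖w‖)) ^ 2 ≤ (1 - τ) ^ 2 * (2 * (a ^ 2 + ‖w‖ ^ 2)) := by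
        rw [mul_pow]
        gcongr
        nlinarith [sq_nonneg (|a| - ‖w‖), sq_abs a]
    _ = 2 * (1 - τ) * ((1 - τ) * (a ^ 2 + ‖w‖ ^ 2)) := by ring
    _ ≤ 2 * 1 * ‖a • v + w‖ ^ 2 := by gcongr; linarith
    _ ≤ (2 * ‖a • v + w‖) ^ 2 := by nlinarith [sq_nonneg ‖a • v + w‖]

lemma norm_apply_le_of_sup_span_eq_top (f : E →ₗ[ℝ] E) {v : E} {c τ K : ℝ} {W : Submodule ℝ E}
    (hv : ‖v‖ = 1) (hfv : f v = c • v) (hWv : W ⊔ Submodule.span ℝ {v} = ⊤) (hτ0 : 0 ≤ τ)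
    (hτ1 : τ < 1) (hvW : ∀ w ∈ W, |⟪v, w⟫| ≤ τ * ‖w‖) (hK : 0 ≤ K)
    (hfW : ∀ w ∈ W, ‖f w‖ ≤ K * |c| * ‖w‖) (x : E) :
    ‖f x‖ ≤ 2 * (1 + K) / (1 - τ) * |c| * ‖x‖ := by
  obtain ⟨w, hw, z, hz, rfl⟩ := Submodule.mem_sup.mp (hWv ▸ Submodule.mem_top (x := x))
  obtain ⟨a, rfl⟩ := Submodule.mem_span_singleton.mp hz
  rw [add_comm w]
  have htrans := one_sub_mul_abs_add_norm_le (a := a) hv hτ0 (hvW w hw)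
  have hsplit : ‖f (a • v + w)‖ ≤ |a| * |c| + K * |c| * ‖w‖ := by
    rw [map_add, map_smul, hfv, smul_smul]
    refine (norm_add_le _ _).trans ?_
    rw [norm_smul, hv, mul_one, Real.norm_eq_abs, abs_mul]
    gcongr
    exact hfW w hw
  calc ‖f (a • v + w)‖ ≤ |a| * |c| + K * |c| * ‖w‖ := hsplit
    _ ≤ (1 + K) * |c| * (|a| + ‖w‖) := by
        nlinarith [mul_nonneg (mul_nonneg hK (abs_nonneg c)) (abs_nonneg a),
          mul_nonneg (abs_nonneg c) (norm_nonneg w)]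
    _ ≤ (1 + K) * |c| * (2 / (1 - τ) * ‖a • v + w‖) := by
        gcongr
        rw [div_mul_eq_mul_div, le_div_iff₀ (by linarith)]
        linarith
    _ = 2 * (1 + K) / (1 - τ) * |c| * ‖a • v + w‖ := by ring

end Transversal

section Cone

variable {d : ℕ}

lemma one_sub_le_norm_add_smul {v w : EuclideanSpace ℝ (Fin d)} {s : ℝ} (hv : ‖v‖ = 1)
    (hw : ‖w‖ = 1) (hs : 0 ≤ s) : 1 - s ≤ ‖v + s • w‖ := by
  have h := norm_sub_norm_le v (-(s • w))
  rwa [sub_neg_eq_add, norm_neg, norm_smul, hw, hv, Real.norm_eq_abs, abs_of_nonneg hs,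
    mul_one] at h

lemma lt_rho_add_smul {v w w' : EuclideanSpace ℝ (Fin d)} {s τ θ : ℝ} (hθ : θ ≤ π)
    (hv : ‖v‖ = 1) (hw : ‖w‖ = 1) (hs : 0 ≤ s) (hτ : 0 ≤ τ) (hsτ : τ + 2 * s < cos θ)
    (hvw' : |⟪v, w'⟫| ≤ τ * ‖w'‖) (hw' : w' ≠ 0) : θ < rho (v + s • w) w' := by
  apply lt_rho_of_abs_inner_lt hθ
  have hww' : |⟪w, w'⟫| ≤ ‖w'‖ := by simpa [hw] using abs_real_inner_le_norm w w'
  have hinner : |⟪v + s • w, w'⟫| ≤ (τ + s) * ‖w'‖ := by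
    rw [inner_add_left, real_inner_smul_left]
    refine (abs_add_le _ _).trans ?_
    rw [abs_mul, abs_of_nonneg hs]
    nlinarith
  have hw'pos : 0 < ‖w'‖ := norm_pos_iff.mpr hw'
  have hu := one_sub_le_norm_add_smul hv hw hs
  have hcos : cos θ ≤ 1 := cos_le_one θ
  calc |⟪v + s • w, w'⟫| ≤ (τ + s) * ‖w'‖ := hinner
    _ < (cos θ - s) * ‖w'‖ := by gcongr; linarith
    _ ≤ cos θ * (1 - s) * ‖w'‖ := by gcongr; nlinarith
    _ ≤ cos θ * (‖v + s • w‖ * ‖w'‖) := by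
        rw [← mul_assoc]; gcongr; linarith

lemma mul_sub_mul_norm_le_of_rho_le {v y : EuclideanSpace ℝ (Fin d)} {c s τ θ : ℝ}
    (hθ : θ ≤ π) (hv : ‖v‖ = 1) (hs : 0 ≤ s) (hcos : 0 ≤ cos θ)
    (hyv : |⟪y, v⟫| ≤ τ * ‖y‖) (h : rho (c • v + s • y) v ≤ θ) :
    s * (cos θ - τ) * ‖y‖ ≤ 2 * |c| := by
  have hlower := cos_mul_le_abs_inner_of_rho_le hθ h
  have hinner : |⟪c • v + s • y, v⟫| ≤ |c| + s * (τ * ‖y‖) := by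
    rw [inner_add_left, real_inner_smul_left, real_inner_smul_left, real_inner_self_eq_norm_sq,
      hv, one_pow, mul_one]
    refine (abs_add_le _ _).trans ?_
    rw [abs_mul, abs_of_nonneg hs]
    gcongr
  have hnorm : s * ‖y‖ - |c| ≤ ‖c • v + s • y‖ := by
    have h := norm_sub_norm_le (s • y) (-(c • v))
    rwa [sub_neg_eq_add, norm_neg, norm_smul, norm_smul, hv, Real.norm_eq_abs,
      Real.norm_eq_abs, abs_of_nonneg hs, mul_one, add_comm] at h
  rw [hv, mul_one] at hlower
  nlinarith [cos_le_one θ, abs_nonneg c]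

end Cone

section Hyperplane

variable {d : ℕ}

lemma abs_inner_le_cos_mul_of_two_mul_le_rho {v w : EuclideanSpace ℝ (Fin d)} {ε : ℝ}
    (hε : 0 ≤ ε) (hv : ‖v‖ = 1) (hvw : w ≠ 0 → 2 * ε ≤ rho v w) :
    |⟪v, w⟫| ≤ cos (2 * ε) * ‖w‖ := by
  rcases eq_or_ne w 0 with rfl | hw
  · simp
  · simpa [hv] using abs_inner_le_of_le_rho (by positivity) (hvw hw)

variable (f : EuclideanSpace ℝ (Fin d) →ₗ[ℝ] EuclideanSpace ℝ (Fin d))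
  {v w : EuclideanSpace ℝ (Fin d)} {W : Submodule ℝ (EuclideanSpace ℝ (Fin d))} {c ε : ℝ}

lemma norm_apply_le_of_mapsTo_cone_of_norm_eq_one (hε : 0 < ε) (hv : ‖v‖ = 1) (hfv : f v = c • v)
    (hWf : ∀ w ∈ W, f w ∈ W) (hvW : ∀ w ∈ W, w ≠ 0 → 2 * ε ≤ rho v w)
    (hcone : ∀ u, u ≠ 0 → (∀ w ∈ W, w ≠ 0 → ε < rho u w) → rho (f u) v ≤ ε)
    (hw : w ∈ W) (hw1 : ‖w‖ = 1) :
    ‖f w‖ ≤ 8 / (cos ε - cos (2 * ε)) ^ 2 * |c| := by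
  have hw0 : w ≠ 0 := by rintro rfl; simp at hw1
  have hεπ : ε ≤ π / 4 := by linarith [hvW w hw hw0, rho_le_pi_div_two v w]
  have hτ : 0 ≤ cos (2 * ε) := cos_nonneg_of_mem_Icc ⟨by linarith [pi_pos], by linarith⟩
  set δ := cos ε - cos (2 * ε)
  have hδpos : 0 < δ := sub_pos.mpr <|
    cos_lt_cos_of_nonneg_of_le_pi hε.le (by linarith [pi_pos]) (by linarith)
  have hvW' : ∀ w ∈ W, |⟪v, w⟫| ≤ cos (2 * ε) * ‖w‖ := fun w hw =>
    abs_inner_le_cos_mul_of_two_mul_le_rho hε.le hv (hvW w hw)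
  set u := v + (δ / 4) • w
  have hu0 : u ≠ 0 := by
    refine norm_pos_iff.mp (lt_of_lt_of_le ?_ (one_sub_le_norm_add_smul hv hw1 (by positivity)))
    linarith [cos_le_one ε, neg_one_le_cos (2 * ε)]
  have hucone : ∀ w' ∈ W, w' ≠ 0 → ε < rho u w' := fun w' hw' hw'0 =>
    lt_rho_add_smul (by linarith) hv hw1 (by positivity) hτ (by linarith) (hvW' w' hw') hw'0
  have hfu : f u = c • v + (δ / 4) • f w := by rw [map_add, map_smul, hfv]
  have key := mul_sub_mul_norm_le_of_rho_le (by linarith) hv (by positivity)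
    (cos_nonneg_of_mem_Icc ⟨by linarith, by linarith⟩)
    (real_inner_comm v (f w) ▸ hvW' (f w) (hWf w hw)) (hfu ▸ hcone u hu0 hucone)
  rw [div_mul_eq_mul_div, le_div_iff₀ (by positivity)]
  nlinarith

lemma norm_apply_le_of_mapsTo_cone (hε : 0 < ε) (hv : ‖v‖ = 1) (hfv : f v = c • v)
    (hWf : ∀ w ∈ W, f w ∈ W) (hvW : ∀ w ∈ W, w ≠ 0 → 2 * ε ≤ rho v w)
    (hcone : ∀ u, u ≠ 0 → (∀ w ∈ W, w ≠ 0 → ε < rho u w) → rho (f u) v ≤ ε)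
    (hw : w ∈ W) : ‖f w‖ ≤ 8 / (cos ε - cos (2 * ε)) ^ 2 * |c| * ‖w‖ := by
  rcases eq_or_ne w 0 with rfl | hw0
  · simp
  have hwpos : 0 < ‖w‖ := norm_pos_iff.mpr hw0
  have hunit := norm_apply_le_of_mapsTo_cone_of_norm_eq_one f hε hv hfv hWf hvW hcone
    (W.smul_mem ‖w‖⁻¹ hw) (by rw [norm_smul, norm_inv, norm_norm, inv_mul_cancel₀ hwpos.ne'])
  rw [map_smul, norm_smul, norm_inv, norm_norm, inv_mul_le_iff₀ hwpos] at hunit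
  linarith

end Hyperplane

lemma mApply_units_ne_zero {d : ℕ} (g : GL (Fin d) ℝ) {x : EuclideanSpace ℝ (Fin d)}
    (hx : x ≠ 0) : mApply (↑g : Matrix (Fin d) (Fin d) ℝ) x ≠ 0 := by
  intro h
  have hg : (↑g : Matrix (Fin d) (Fin d) ℝ) *ᵥ WithLp.ofLp x =
      (↑g : Matrix (Fin d) (Fin d) ℝ) *ᵥ 0 := by
    rw [mulVec_zero]
    exact congrArg WithLp.ofLp h
  exact hx (WithLp.ofLp_injective 2 (mulVec_injective_of_isUnit g.isUnit hg))

/-- Since `rho ≤ π / 2`, an `ε`-proximal matrix with `ε > π / 4` has `V_g^< = 0`; capping `ε` at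
`π / 4` in the denominator only keeps the constant positive. -/
noncomputable def proximalNormConst (ε : ℝ) : ℝ :=
  2 * (1 + 8 / (cos ε - cos (2 * ε)) ^ 2) / (1 - cos (2 * min ε (π / 4)))

lemma cos_two_mul_min_pi_div_four_mem_Ico {ε : ℝ} (hε : 0 < ε) :
    cos (2 * min ε (π / 4)) ∈ Set.Ico 0 1 := by
  have hmin : 0 < min ε (π / 4) := lt_min hε (by positivity)
  have hle : min ε (π / 4) ≤ π / 4 := min_le_right ε (π / 4)
  refine ⟨cos_nonneg_of_mem_Icc ⟨by linarith [pi_pos], by linarith⟩, ?_⟩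
  simpa using cos_lt_cos_of_nonneg_of_le_pi le_rfl (by linarith)
    (by linarith : 0 < 2 * min ε (π / 4))

lemma two_le_proximalNormConst {ε : ℝ} (hε : 0 < ε) : 2 ≤ proximalNormConst ε := by
  obtain ⟨hτ0, hτ1⟩ := cos_two_mul_min_pi_div_four_mem_Ico hε
  rw [proximalNormConst, le_div_iff₀ (by linarith)]
  have : 0 ≤ 8 / (cos ε - cos (2 * ε)) ^ 2 := by positivity
  nlinarith

namespace IsEpsProximal

variable {d : ℕ} {ε : ℝ} {g : Matrix (Fin d) (Fin d) ℝ}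

lemma eigMax_le_opN (hg : IsEpsProximal ε g) : eigMax g ≤ opN g := by
  obtain ⟨-, v, c, -, hv, hgv, hc, -⟩ := hg
  have h := (Matrix.toEuclideanCLM (𝕜 := ℝ) g).le_opNorm v
  have hgv' : ‖Matrix.toEuclideanCLM (𝕜 := ℝ) g v‖ = |c| := by
    change ‖mApply g v‖ = |c|
    rw [hgv, norm_smul, hv, mul_one, Real.norm_eq_abs]
  rw [hv, mul_one, hgv'] at h
  rwa [← hc]

lemma eigMax_pos (g : GL (Fin d) ℝ) (hg : IsEpsProximal ε (↑g : Matrix (Fin d) (Fin d) ℝ)) :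
    0 < eigMax (↑g : Matrix (Fin d) (Fin d) ℝ) := by
  obtain ⟨-, v, c, -, hv, hgv, hc, -⟩ := hg
  have hv0 : v ≠ 0 := by rintro rfl; simp at hv
  rw [← hc, abs_pos]
  rintro rfl
  exact mApply_units_ne_zero g hv0 (by rw [hgv, zero_smul])

lemma opN_le (hε : 0 < ε) (hg : IsEpsProximal ε g) :
    opN g ≤ proximalNormConst ε * eigMax g := by
  obtain ⟨-, v, c, W, hv, hgv, hc, hWd, hWg, hvW, hvW', hcone, -⟩ := hg
  obtain ⟨hτ0, hτ1⟩ := cos_two_mul_min_pi_div_four_mem_Ico hε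
  have hvWτ : ∀ w ∈ W, |⟪v, w⟫| ≤ cos (2 * min ε (π / 4)) * ‖w‖ := fun w hw =>
    abs_inner_le_cos_mul_of_two_mul_le_rho (le_min hε.le (by positivity)) hv fun hw0 =>
      (mul_le_mul_of_nonneg_left (min_le_left _ _) zero_le_two).trans (hvW' w hw hw0)
  have hWv := Submodule.sup_span_singleton_eq_top (by rwa [finrank_euclideanSpace_fin]) hvW
  rw [← hc]
  refine ContinuousLinearMap.opNorm_le_bound _
    (mul_nonneg (zero_le_two.trans (two_le_proximalNormConst hε)) (abs_nonneg c)) fun x => ?_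
  exact norm_apply_le_of_sup_span_eq_top (Matrix.toEuclideanLin g) hv hgv hWv hτ0 hτ1 hvWτ
    (by positivity) (fun w hw => norm_apply_le_of_mapsTo_cone _ hε hv hgv hWg hvW' hcone hw) x

end IsEpsProximal

/-- For every ε > 0 there is C = C(ε) > 0 such that every ε-proximal g satisfies
log‖g‖ − C ≤ log|eig₁(g)| ≤ log‖g‖. -/
theorem log_spectral_radius_comparable_log_norm {d : ℕ} (ε : ℝ) (hε : 0 < ε) :
    ∃ C : ℝ, 0 < C ∧ ∀ g : GL (Fin d) ℝ,
      IsEpsProximal ε (↑g : Matrix (Fin d) (Fin d) ℝ) →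
        Real.log (opN (↑g : Matrix (Fin d) (Fin d) ℝ)) - C
            ≤ Real.log (eigMax (↑g : Matrix (Fin d) (Fin d) ℝ)) ∧
          Real.log (eigMax (↑g : Matrix (Fin d) (Fin d) ℝ))
            ≤ Real.log (opN (↑g : Matrix (Fin d) (Fin d) ℝ)) := by
  have hM := two_le_proximalNormConst hε
  refine ⟨Real.log (proximalNormConst ε), Real.log_pos (by linarith), fun g hg => ?_⟩
  have hpos := hg.eigMax_pos g
  have hle := hg.eigMax_le_opN
  constructor
  · rw [sub_le_iff_le_add', ← Real.log_mul (by positivity) hpos.ne']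
    exact Real.log_le_log (hpos.trans_le hle) (hg.opN_le hε)
  · exact Real.log_le_log hpos hle
end
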